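/- arXiv:1708.02042 — 2 statements merged into one kernel-verified Lean document; each statement's English description precedes it below -/
import Mathlib

section
/- Let φ : ℝ^d → ℝ be Lipschitz with constant L. For a uniform grid x_i = iρ with Q₁ (multilinear) basis functions β_i forming a partition of unity supported near x_i, the interpolant I[φ](x) := Σ_i φ(x_i) β_i(x) is Lipschitz with constant at most √d · L. -/
/-!
On a grid cell `∏ₖ [nₖρ, (nₖ+1)ρ]` the interpolant is the multilinear interpolant of the values
of `φ` at the `2^d` corners. Along a coordinate direction `k` it is affine on the cell, with slope
`1/ρ` times the multilinear interpolant of the corner differences `φ(c + ρ eₖ) - φ(c)`; these are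
at most `Lρ` in absolute value and the multilinear weights form a partition of unity, so the
interpolant is `L`-Lipschitz in each coordinate on each cell, hence on each whole coordinate line.
Walking from `x` to `y` one coordinate at a time gives `|I x - I y| ≤ L ∑ₖ |xₖ - yₖ|`, and
Cauchy–Schwarz bounds the `ℓ¹` norm by `√d` times the Euclidean one.
-/

open Function Set
open scoped NNReal

section Lipschitz

variable {E : Type*} [PseudoMetricSpace E]

theorem LipschitzOnWith.Icc_union_Icc {g : ℝ → E} {K : ℝ≥0} {a b c : ℝ}
    (hab : LipschitzOnWith K g (Icc a b)) (hbc : LipschitzOnWith K g (Icc b c))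
    (h₁ : a ≤ b) (h₂ : b ≤ c) : LipschitzOnWith K g (Icc a c) := by
  suffices H : ∀ t ∈ Icc a c, ∀ u ∈ Icc a c, t ≤ u → dist (g t) (g u) ≤ K * dist t u by
    refine LipschitzOnWith.of_dist_le_mul fun t ht u hu => ?_
    rcases le_total t u with htu | hut
    · exact H t ht u hu htu
    · rw [dist_comm, dist_comm t]; exact H u hu t ht hut
  intro t ht u hu htu
  by_cases htb : t ≤ b <;> by_cases hub : u ≤ b
  · exact hab.dist_le_mul t ⟨ht.1, htb⟩ u ⟨hu.1, hub⟩
  · calc dist (g t) (g u) ≤ dist (g t) (g b) + dist (g b) (g u) := dist_triangle _ _ _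
      _ ≤ K * dist t b + K * dist b u :=
          add_le_add (hab.dist_le_mul t ⟨ht.1, htb⟩ b ⟨h₁, le_rfl⟩)
            (hbc.dist_le_mul b ⟨le_rfl, h₂⟩ u ⟨by linarith, hu.2⟩)
      _ = K * dist t u := by
          rw [Real.dist_eq, Real.dist_eq, Real.dist_eq, abs_of_nonpos (by linarith),
            abs_of_nonpos (by linarith), abs_of_nonpos (by linarith)]
          ring
  · linarith
  · exact hbc.dist_le_mul t ⟨by linarith, ht.2⟩ u ⟨by linarith, hu.2⟩

theorem lipschitzWith_of_lipschitzOnWith_Icc_int_mul {g : ℝ → E} {K : ℝ≥0} {ρ : ℝ} (hρ : 0 < ρ)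
    (hg : ∀ m : ℤ, LipschitzOnWith K g (Icc (m * ρ) ((m + 1) * ρ))) : LipschitzWith K g := by
  have hN : ∀ N : ℕ, ∀ m : ℤ, LipschitzOnWith K g (Icc (m * ρ) ((m + N) * ρ)) := by
    intro N
    induction N with
    | zero => exact fun m => (hg m).mono (Icc_subset_Icc le_rfl (by push_cast; linarith))
    | succ N ih =>
      intro m
      have ih' := ih (m + 1)
      push_cast at ih' ⊢
      rw [← add_assoc, add_right_comm]
      exact (hg m).Icc_union_Icc ih' (by nlinarith) (by nlinarith)
  refine LipschitzWith.of_dist_le_mul fun t u => ?_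
  obtain ⟨N, hN'⟩ := exists_nat_ge (max |t| |u| / ρ)
  rw [div_le_iff₀ hρ] at hN'
  have hmem : ∀ v, |v| ≤ N * ρ →
      v ∈ Icc (((-N : ℤ) : ℝ) * ρ) ((((-N : ℤ) : ℝ) + (2 * N : ℕ)) * ρ) := by
    intro v hv
    push_cast
    constructor <;> linarith [abs_le.1 hv]
  exact (hN (2 * N) (-N)).dist_le_mul t (hmem t (by linarith [le_max_left |t| |u|]))
    u (hmem u (by linarith [le_max_right |t| |u|]))

end Lipschitz

namespace EuclideanSpace

variable {ι : Type*} [Fintype ι]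

theorem sum_norm_le_sqrt_card_mul_norm {𝕜 : Type*} [RCLike 𝕜] (v : EuclideanSpace 𝕜 ι) :
    ∑ k, ‖v k‖ ≤ √(Fintype.card ι) * ‖v‖ := by
  rw [← Real.sqrt_sq (norm_nonneg v), ← Real.sqrt_mul (Nat.cast_nonneg _)]
  refine Real.le_sqrt_of_sq_le ?_
  rw [EuclideanSpace.norm_sq_eq]
  simpa using sq_sum_le_card_mul_sum_sq (s := Finset.univ) (f := fun k => ‖v k‖)

variable [DecidableEq ι] {E : Type*} [PseudoMetricSpace E]

theorem lipschitzWith_of_lipschitzWith_update {f : EuclideanSpace ℝ ι → E} {K : ℝ≥0}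
    (hf : ∀ (x : EuclideanSpace ℝ ι) k,
      LipschitzWith K fun t => f (WithLp.toLp 2 (update (WithLp.ofLp x) k t))) :
    LipschitzWith (NNReal.sqrt (Fintype.card ι) * K) f := by
  refine LipschitzWith.of_dist_le_mul fun x y => ?_
  have hpath : ∀ s : Finset ι, dist (f x) (f (WithLp.toLp 2 (s.piecewise y x))) ≤
      K * ∑ k ∈ s, dist (x k) (y k) := by
    intro s
    induction s using Finset.induction_on with
    | empty => simp
    | insert a s ha ih =>
      have hx : s.piecewise (WithLp.ofLp y) (WithLp.ofLp x) =
          update (s.piecewise (WithLp.ofLp y) (WithLp.ofLp x)) a (x a) := by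
        rw [eq_comm, update_eq_iff]
        simp [Finset.piecewise_eq_of_notMem _ _ _ ha]
      rw [Finset.piecewise_insert, Finset.sum_insert ha, mul_add, add_comm]
      refine (dist_triangle _ _ _).trans (add_le_add ih ?_)
      have h := (hf (WithLp.toLp 2 (s.piecewise (WithLp.ofLp y) (WithLp.ofLp x))) a).dist_le_mul
        (x a) (y a)
      rwa [WithLp.ofLp_toLp, ← hx] at h
  calc dist (f x) (f y) ≤ K * ∑ k, dist (x k) (y k) := by simpa using hpath Finset.univ
    _ ≤ K * (√(Fintype.card ι) * dist x y) := by
        gcongr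
        simpa [dist_eq_norm] using sum_norm_le_sqrt_card_mul_norm (x - y)
    _ = ↑(NNReal.sqrt (Fintype.card ι) * K) * dist x y := by push_cast; ring

end EuclideanSpace

namespace GridInterpolation

noncomputable def gridHat (ρ : ℝ) (n : ℤ) (t : ℝ) : ℝ :=
  max (1 - |t - n * ρ| / ρ) 0

theorem mem_Icc_floor {ρ : ℝ} (hρ : 0 < ρ) (t : ℝ) :
    t ∈ Icc (⌊t / ρ⌋ * ρ) ((⌊t / ρ⌋ + 1) * ρ) :=
  ⟨(le_div_iff₀ hρ).1 (Int.floor_le _), ((div_lt_iff₀ hρ).1 (Int.lt_floor_add_one _)).le⟩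

theorem sub_div_mem_Icc {ρ t : ℝ} {m : ℤ} (hρ : 0 < ρ) (ht : t ∈ Icc (m * ρ) ((m + 1) * ρ)) :
    (t - m * ρ) / ρ ∈ Icc 0 1 := by
  obtain ⟨h₁, h₂⟩ := ht
  constructor
  · exact div_nonneg (by linarith) hρ.le
  · rw [div_le_one hρ]; linarith

theorem gridHat_add_ite {ρ t : ℝ} {m : ℤ} (hρ : 0 < ρ) (ht : t ∈ Icc (m * ρ) ((m + 1) * ρ))
    (b : Bool) :
    gridHat ρ (m + if b then 1 else 0) t = if b then (t - m * ρ) / ρ else 1 - (t - m * ρ) / ρ := by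
  have hs := sub_div_mem_Icc hρ ht
  obtain ⟨h₁, h₂⟩ := ht
  cases b
  · rw [gridHat, if_neg Bool.false_ne_true, if_neg Bool.false_ne_true, add_zero,
      abs_of_nonneg (by linarith)]
    exact max_eq_left (by linarith [hs.2])
  · have : |t - ((m + 1 : ℤ) : ℝ) * ρ| / ρ = 1 - (t - m * ρ) / ρ := by
      rw [abs_of_nonpos (by push_cast; linarith)]
      field_simp
      push_cast
      ring
    rw [gridHat, if_pos rfl, if_pos rfl, this, sub_sub_cancel]
    exact max_eq_left hs.1

theorem gridHat_eq_zero {ρ t : ℝ} {m n : ℤ} (hρ : 0 < ρ) (ht : t ∈ Icc (m * ρ) ((m + 1) * ρ))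
    (hm : n ≠ m) (hm' : n ≠ m + 1) : gridHat ρ n t = 0 := by
  obtain ⟨h₁, h₂⟩ := ht
  have hfar : ρ ≤ |t - n * ρ| := by
    rcases lt_or_gt_of_ne hm with h | h
    · have : (n : ℝ) + 1 ≤ m := by exact_mod_cast h
      rw [le_abs]; left; nlinarith
    · have : (m : ℝ) + 2 ≤ n := by exact_mod_cast (by omega : m + 2 ≤ n)
      rw [le_abs]; right; nlinarith
  exact max_eq_right (by rw [sub_nonpos, one_le_div hρ]; exact hfar)

section Cube

variable {ι : Type*} [Fintype ι]

def cubeWeight (s : ι → ℝ) (ε : ι → Bool) : ℝ :=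
  ∏ j, if ε j then s j else 1 - s j

theorem cubeWeight_nonneg {s : ι → ℝ} (hs : ∀ j, s j ∈ Icc 0 1) (ε : ι → Bool) :
    0 ≤ cubeWeight s ε :=
  Finset.prod_nonneg fun j _ => by split_ifs <;> linarith [(hs j).1, (hs j).2]

variable [DecidableEq ι]

def cubeInterp (F : (ι → Bool) → ℝ) (s : ι → ℝ) : ℝ :=
  ∑ ε, F ε * cubeWeight s ε

theorem sum_cubeWeight (s : ι → ℝ) : ∑ ε, cubeWeight s ε = 1 := by
  simp only [cubeWeight, ← Fintype.prod_sum (fun j (b : Bool) => if b then s j else 1 - s j)]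
  simp

theorem abs_cubeInterp_le {F : (ι → Bool) → ℝ} {M : ℝ} {s : ι → ℝ} (hF : ∀ ε, |F ε| ≤ M)
    (hs : ∀ j, s j ∈ Icc 0 1) : |cubeInterp F s| ≤ M :=
  calc |cubeInterp F s| ≤ ∑ ε, |F ε| * cubeWeight s ε := by
        refine (Finset.abs_sum_le_sum_abs _ _).trans_eq (Finset.sum_congr rfl fun ε _ => ?_)
        rw [abs_mul, abs_of_nonneg (cubeWeight_nonneg hs ε)]
    _ ≤ ∑ ε, M * cubeWeight s ε :=
        Finset.sum_le_sum fun ε _ => mul_le_mul_of_nonneg_right (hF ε) (cubeWeight_nonneg hs ε)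
    _ = M := by rw [← Finset.mul_sum, sum_cubeWeight, mul_one]

theorem sum_eq_sum_funSplitAt {M : Type*} [AddCommMonoid M] (k : ι) (G : (ι → Bool) → M) :
    ∑ ε, G ε = ∑ η : {j // j ≠ k} → Bool,
      (G ((Equiv.funSplitAt k Bool).symm (true, η)) +
        G ((Equiv.funSplitAt k Bool).symm (false, η))) := by
  rw [← (Equiv.funSplitAt k Bool).symm.sum_comp, Fintype.sum_prod_type_right]
  simp only [Fintype.sum_bool]

omit [Fintype ι] in
theorem update_funSplitAt_symm (k : ι) (b c : Bool) (η : {j // j ≠ k} → Bool) :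
    update ((Equiv.funSplitAt k Bool).symm (b, η)) k c = (Equiv.funSplitAt k Bool).symm (c, η) := by
  ext j
  by_cases hj : j = k
  · subst hj; simp
  · simp [hj]

theorem cubeWeight_update_funSplitAt_symm (s : ι → ℝ) (k : ι) (a : ℝ) (b : Bool)
    (η : {j // j ≠ k} → Bool) :
    cubeWeight (update s k a) ((Equiv.funSplitAt k Bool).symm (b, η)) =
      (if b then a else 1 - a) * ∏ j : {j // j ≠ k}, if η j then s j else 1 - s j := by
  rw [cubeWeight, Fintype.prod_eq_mul_prod_subtype_ne _ k]
  congr 1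
  · simp
  · exact Finset.prod_congr rfl fun j _ => by simp [j.2]

theorem cubeInterp_update_sub_update (F : (ι → Bool) → ℝ) (s : ι → ℝ) (k : ι) (a b : ℝ) :
    cubeInterp F (update s k a) - cubeInterp F (update s k b) =
      (a - b) * cubeInterp (fun ε => F (update ε k true) - F (update ε k false)) s := by
  conv_rhs => rw [← update_eq_self k s]
  simp only [cubeInterp, sum_eq_sum_funSplitAt k, cubeWeight_update_funSplitAt_symm,
    update_funSplitAt_symm, ← Finset.sum_sub_distrib, Finset.mul_sum]
  refine Finset.sum_congr rfl fun η _ => ?_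
  simp only [if_true, Bool.false_eq_true, if_false]
  ring

theorem abs_cubeInterp_update_sub_update_le {F : (ι → Bool) → ℝ} {M : ℝ} {s : ι → ℝ} {k : ι}
    (hF : ∀ ε, |F (update ε k true) - F (update ε k false)| ≤ M)
    (hs : ∀ j ≠ k, s j ∈ Icc 0 1) (a b : ℝ) :
    |cubeInterp F (update s k a) - cubeInterp F (update s k b)| ≤ M * |a - b| := by
  have hs₀ : ∀ j, update s k 0 j ∈ Icc 0 1 := by
    intro j
    by_cases hj : j = k
    · subst hj; simp
    · simpa [hj] using hs j hj
  have h := cubeInterp_update_sub_update F (update s k 0) k a b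
  simp only [update_idem] at h
  rw [h, abs_mul, mul_comm]
  exact mul_le_mul_of_nonneg_right (abs_cubeInterp_le hF hs₀) (abs_nonneg _)

end Cube

variable {ι : Type*}

noncomputable def gridPoint (ρ : ℝ) (i : ι → ℤ) : EuclideanSpace ℝ ι :=
  WithLp.toLp 2 fun k => (i k : ℝ) * ρ

def cellCorner (n : ι → ℤ) (ε : ι → Bool) : ι → ℤ :=
  fun j => n j + if ε j then 1 else 0

theorem cellCorner_injective (n : ι → ℤ) : Injective (cellCorner n) := by
  intro ε ε' h
  funext j
  have := congrFun h j
  cases hε : ε j <;> cases hε' : ε' j <;> simp_all [cellCorner]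

variable [DecidableEq ι]

theorem gridPoint_cellCorner_update_sub (ρ : ℝ) (n : ι → ℤ) (ε : ι → Bool) (k : ι) :
    gridPoint ρ (cellCorner n (update ε k true)) - gridPoint ρ (cellCorner n (update ε k false)) =
      EuclideanSpace.single k ρ := by
  ext j
  by_cases hj : j = k
  · subst hj; simp [gridPoint, cellCorner, add_mul]
  · simp [gridPoint, cellCorner, hj]

variable [Fintype ι]

noncomputable def gridInterp (ρ : ℝ) (φ : EuclideanSpace ℝ ι → ℝ) (x : EuclideanSpace ℝ ι) : ℝ :=
  ∑' i : ι → ℤ, φ (gridPoint ρ i) * ∏ k, gridHat ρ (i k) (x k)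

theorem gridInterp_eq_cubeInterp {ρ : ℝ} (hρ : 0 < ρ) (φ : EuclideanSpace ℝ ι → ℝ) {n : ι → ℤ}
    {x : EuclideanSpace ℝ ι} (hx : ∀ j, x j ∈ Icc (n j * ρ) ((n j + 1) * ρ)) :
    gridInterp ρ φ x =
      cubeInterp (fun ε => φ (gridPoint ρ (cellCorner n ε))) fun j => (x j - n j * ρ) / ρ := by
  rw [gridInterp, tsum_eq_sum (s := Finset.univ.image (cellCorner n)),
    Finset.sum_image fun ε _ ε' _ h => cellCorner_injective n h]
  · refine Finset.sum_congr rfl fun ε _ => congrArg _ (Finset.prod_congr rfl fun j _ => ?_)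
    exact gridHat_add_ite hρ (hx j) (ε j)
  · intro i hi
    obtain ⟨j, hj, hj'⟩ : ∃ j, i j ≠ n j ∧ i j ≠ n j + 1 := by
      by_contra! h
      refine hi (Finset.mem_image.2 ⟨fun j => decide (i j ≠ n j), Finset.mem_univ _, ?_⟩)
      funext j
      by_cases hj : i j = n j
      · simp [cellCorner, hj]
      · simp [cellCorner, h j hj]
    rw [Finset.prod_eq_zero (Finset.mem_univ j) (gridHat_eq_zero hρ (hx j) hj hj'), mul_zero]

theorem lipschitzOnWith_gridInterp_update {ρ : ℝ} (hρ : 0 < ρ) {φ : EuclideanSpace ℝ ι → ℝ}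
    {K : ℝ≥0} (hφ : LipschitzWith K φ) (x : EuclideanSpace ℝ ι) (k : ι) (m : ℤ) :
    LipschitzOnWith K (fun t => gridInterp ρ φ (WithLp.toLp 2 (update (WithLp.ofLp x) k t)))
      (Icc (m * ρ) ((m + 1) * ρ)) := by
  -- the cell containing `update x k t` for every `t` in the `m`-th interval
  set n : ι → ℤ := update (fun j => ⌊x j / ρ⌋) k m
  have hcell : ∀ t ∈ Icc (m * ρ) ((m + 1) * ρ), ∀ j,
      update (WithLp.ofLp x) k t j ∈ Icc (n j * ρ) ((n j + 1) * ρ) := by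
    intro t ht j
    by_cases hj : j = k
    · subst hj; simpa [n] using ht
    · simpa [n, hj] using mem_Icc_floor hρ (x j)
  have hcoord : ∀ t, (fun j => (update (WithLp.ofLp x) k t j - n j * ρ) / ρ) =
      update (fun j => (x j - n j * ρ) / ρ) k ((t - m * ρ) / ρ) := by
    intro t
    funext j
    by_cases hj : j = k
    · subst hj; simp [n]
    · simp [n, hj]
  have hs : ∀ j ≠ k, (x j - n j * ρ) / ρ ∈ Icc 0 1 := fun j hj => by
    simpa [n, hj] using sub_div_mem_Icc hρ (mem_Icc_floor hρ (x j))
  have hF : ∀ ε, |φ (gridPoint ρ (cellCorner n (update ε k true))) -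
      φ (gridPoint ρ (cellCorner n (update ε k false)))| ≤ K * ρ := fun ε => by
    rw [← Real.dist_eq]
    refine (hφ.dist_le_mul _ _).trans_eq ?_
    rw [dist_eq_norm, gridPoint_cellCorner_update_sub, PiLp.norm_single, Real.norm_of_nonneg hρ.le]
  refine LipschitzOnWith.of_dist_le_mul fun t ht u hu => ?_
  rw [Real.dist_eq, gridInterp_eq_cubeInterp hρ φ (hcell t ht),
    gridInterp_eq_cubeInterp hρ φ (hcell u hu), hcoord, hcoord]
  refine (abs_cubeInterp_update_sub_update_le hF hs _ _).trans_eq ?_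
  rw [Real.dist_eq, ← sub_div, sub_sub_sub_cancel_right, abs_div, abs_of_pos hρ]
  field_simp

theorem lipschitzWith_gridInterp {ρ : ℝ} (hρ : 0 < ρ) {φ : EuclideanSpace ℝ ι → ℝ} {K : ℝ≥0}
    (hφ : LipschitzWith K φ) :
    LipschitzWith (NNReal.sqrt (Fintype.card ι) * K) (gridInterp ρ φ) :=
  EuclideanSpace.lipschitzWith_of_lipschitzWith_update fun x k =>
    lipschitzWith_of_lipschitzOnWith_Icc_int_mul hρ (lipschitzOnWith_gridInterp_update hρ hφ x k)

end GridInterpolation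

/-- The multilinear (Q₁) grid interpolant of an `L`-Lipschitz function `φ` on the uniform
grid of mesh `ρ` in `ℝ^d` is Lipschitz with constant `√d · L`. -/
theorem stmt9 (d : ℕ) (ρ L : ℝ) (hρ : 0 < ρ) (hL : 0 ≤ L)
    (φ : EuclideanSpace ℝ (Fin d) → ℝ)
    (hφ : ∀ x y : EuclideanSpace ℝ (Fin d), |φ x - φ y| ≤ L * ‖x - y‖)
    (β : (Fin d → ℤ) → EuclideanSpace ℝ (Fin d) → ℝ)
    (hβ : ∀ i x, β i x = ∏ k : Fin d, max (1 - |x k - (i k : ℝ) * ρ| / ρ) 0)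
    (I : EuclideanSpace ℝ (Fin d) → ℝ)
    (hI : ∀ x, I x = ∑' i : Fin d → ℤ,
      φ (WithLp.toLp 2 (fun k => (i k : ℝ) * ρ)) * β i x) :
    ∀ x y : EuclideanSpace ℝ (Fin d), |I x - I y| ≤ Real.sqrt d * L * ‖x - y‖ := by
  have hI_eq : I = GridInterpolation.gridInterp ρ φ := funext fun x => by simp only [hI, hβ]; rfl
  have hφ_lip : LipschitzWith L.toNNReal φ := LipschitzWith.of_dist_le' fun x y => by
    rw [Real.dist_eq, dist_eq_norm]; exact hφ x y
  intro x y
  have h := (GridInterpolation.lipschitzWith_gridInterp hρ hφ_lip).dist_le_mul x y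
  rw [← hI_eq] at h
  simpa [Real.dist_eq, dist_eq_norm, Real.coe_toNNReal L hL] using h
end

section
/- Let v^n : ℝ^d → ℝ be a sequence of differentiable functions converging locally uniformly to a differentiable function v, all uniformly Lipschitz with constant L, and satisfying the weak semiconcavity property (∇v^n(y) − ∇v^n(x))·(y−x) ≤ c(|y−x|² + η_n²) for all x, y, where η_n → 0 and c > 0 is independent of n. If v satisfies v(y) ≤ v(x) + ∇v(x)·(y−x) + (c/2)|y−x|² for all x,y, then ∇v^n converges to ∇v uniformly on compact subsets of ℝ^d. -/
/-!
Weak semiconcavity with defect `η n`, combined with the gradient bound `L`, makes `∇vₙ(x)` an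
approximate supergradient of `vₙ` at `x`: for `‖w‖ ≤ 1`,
`vₙ(x + w) ≤ vₙ(x) + ⟪∇vₙ(x), w⟫ + c/2 ‖w‖² + 2Lτ + c ηₙ²/τ` for every `τ ∈ (0, 1]`.
Uniform convergence on the unit thickening of `K` passes this to `v` with an error that tends
to `0`. Conversely, at a point of differentiability, approximate supergradients of `v` taken at
nearby points must be close to `∇v(x₀)`. Applying this to both `∇vₙ(x)` and `∇v(x)` gives locally
uniform convergence of the gradients, hence uniform convergence on compact sets.
-/

open Filter Set Metric
open scoped RealInnerProductSpace Topology

variable {F : Type*} [NormedAddCommGroup F] [InnerProductSpace ℝ F]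

theorem HasGradientAt.hasDerivAt_comp_add_smul [CompleteSpace F] {f : F → ℝ} {x w p : F} {s : ℝ}
    (h : HasGradientAt f p (x + s • w)) :
    HasDerivAt (fun t : ℝ => f (x + t • w)) ⟪p, w⟫ s := by
  have hline : HasDerivAt (fun t : ℝ => x + t • w) w s := by
    simpa using ((hasDerivAt_id s).smul_const w).const_add x
  simpa [Function.comp_def] using h.hasFDerivAt.comp_hasDerivAt s hline

theorem sub_le_mul_sub_of_hasDerivAt_le {g g' : ℝ → ℝ} {a b C : ℝ} (hab : a ≤ b)
    (hg : ∀ s, HasDerivAt g (g' s) s) (hle : ∀ s ∈ Ioo a b, g' s ≤ C) :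
    g b - g a ≤ C * (b - a) := by
  have hdiff : Differentiable ℝ g := fun s => (hg s).differentiableAt
  refine (convex_Icc a b).image_sub_le_mul_sub_of_deriv_le hdiff.continuous.continuousOn
    hdiff.differentiableOn (fun s hs => ?_) a (left_mem_Icc.2 hab) b (right_mem_Icc.2 hab) hab
  rw [interior_Icc] at hs
  exact (hg s).deriv ▸ hle s hs

def IsApproxSupergradient (f : F → ℝ) (c γ : ℝ) (x q : F) : Prop :=
  ∀ w : F, ‖w‖ ≤ 1 → f (x + w) ≤ f x + ⟪q, w⟫ + c / 2 * ‖w‖ ^ 2 + γ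

theorem IsApproxSupergradient.mono {f : F → ℝ} {c γ γ' : ℝ} {x q : F}
    (h : IsApproxSupergradient f c γ x q) (hγ : γ ≤ γ') : IsApproxSupergradient f c γ' x q :=
  fun w hw => (h w hw).trans (by linarith)

theorem IsApproxSupergradient.of_abs_sub_le {f g : F → ℝ} {c γ α : ℝ} {x q : F}
    (h : IsApproxSupergradient f c γ x q) (hfg : ∀ y ∈ closedBall x 1, |f y - g y| ≤ α) :
    IsApproxSupergradient g c (γ + 2 * α) x q := by
  intro w hw
  have hx := abs_le.1 (hfg x (mem_closedBall_self zero_le_one))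
  have hxw := abs_le.1 (hfg (x + w) (by simpa [dist_eq_norm] using hw))
  linarith [h w hw]

section WeakSemiconcave

variable [CompleteSpace F] {f : F → ℝ} {L c e : ℝ}

theorem inner_gradient_add_smul_sub_le
    (hsc : ∀ y z, ⟪gradient f z - gradient f y, z - y⟫ ≤ c * (‖z - y‖ ^ 2 + e ^ 2))
    (x w : F) {s : ℝ} (hs : 0 < s) :
    ⟪gradient f (x + s • w) - gradient f x, w⟫ ≤ c * s * ‖w‖ ^ 2 + c * e ^ 2 / s := by
  have h := hsc x (x + s • w)
  rw [add_sub_cancel_left, real_inner_smul_right, norm_smul, Real.norm_eq_abs,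
    abs_of_pos hs] at h
  refine le_of_mul_le_mul_right ?_ hs
  rw [add_mul, div_mul_cancel₀ _ hs.ne']
  linarith

theorem isApproxSupergradient_gradient_of_inner_gradient_sub_le (hf : Differentiable ℝ f)
    (hL : ∀ z, ‖gradient f z‖ ≤ L) (hc : 0 ≤ c) {τ : ℝ} (hτ₀ : 0 < τ) (hτ₁ : τ ≤ 1)
    (hsc : ∀ y z, ⟪gradient f z - gradient f y, z - y⟫ ≤ c * (‖z - y‖ ^ 2 + e ^ 2)) (x : F) :
    IsApproxSupergradient f c (2 * L * τ + c * e ^ 2 / τ) x (gradient f x) := by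
  intro w hw
  set D : ℝ → ℝ := fun s => ⟪gradient f (x + s • w) - gradient f x, w⟫
  set h : ℝ → ℝ := fun s => f (x + s • w) - s * ⟪gradient f x, w⟫
  set k : ℝ → ℝ := fun s => h s - c / 2 * s ^ 2 * ‖w‖ ^ 2
  have hh : ∀ s, HasDerivAt h (D s) s := fun s =>
    ((hf (x + s • w)).hasGradientAt.hasDerivAt_comp_add_smul.sub
      ((hasDerivAt_id s).mul_const ⟪gradient f x, w⟫)).congr_deriv (by simp [D, inner_sub_left])
  have hk : ∀ s, HasDerivAt k (D s - c * s * ‖w‖ ^ 2) s := fun s =>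
    ((hh s).sub (((hasDerivAt_pow 2 s).const_mul (c / 2)).mul_const (‖w‖ ^ 2))).congr_deriv
      (by push_cast; ring)
  -- On `[0, τ]` only the gradient bound is used, on `[τ, 1]` only the weak semiconcavity.
  have h_near : h τ - h 0 ≤ 2 * L * ‖w‖ * (τ - 0) := by
    refine sub_le_mul_sub_of_hasDerivAt_le hτ₀.le hh fun s _ => ?_
    calc D s ≤ ‖gradient f (x + s • w) - gradient f x‖ * ‖w‖ := real_inner_le_norm _ _
      _ ≤ (L + L) * ‖w‖ := by gcongr; exact (norm_sub_le _ _).trans (add_le_add (hL _) (hL _))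
      _ = 2 * L * ‖w‖ := by ring
  have h_far : k 1 - k τ ≤ c * e ^ 2 / τ * (1 - τ) := by
    refine sub_le_mul_sub_of_hasDerivAt_le hτ₁ hk fun s hs => ?_
    have hs₀ : 0 < s := hτ₀.trans hs.1
    have : c * e ^ 2 / s ≤ c * e ^ 2 / τ := by gcongr; exact hs.1.le
    linarith [inner_gradient_add_smul_sub_le hsc x w hs₀]
  have hL₀ : 0 ≤ L := (norm_nonneg _).trans (hL x)
  have : 0 ≤ c * e ^ 2 / τ * τ := by positivity
  have : 0 ≤ c / 2 * τ ^ 2 * ‖w‖ ^ 2 := by positivity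
  have : 2 * L * ‖w‖ * τ ≤ 2 * L * τ := by
    rw [mul_right_comm]; exact mul_le_of_le_one_right (by positivity) hw
  simp only [k, h, one_smul, zero_smul, add_zero] at h_near h_far
  linarith

end WeakSemiconcave

theorem norm_le_of_forall_norm_eq_inner_le {a : F} {t ε : ℝ} (ht : 0 < t) (hε : 0 ≤ ε)
    (h : ∀ u : F, ‖u‖ = t → ⟪a, u⟫ ≤ t * ε) : ‖a‖ ≤ ε := by
  rcases eq_or_ne a 0 with rfl | ha
  · simpa using hε
  have ha' : 0 < ‖a‖ := norm_pos_iff.2 ha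
  have hu := h ((t / ‖a‖) • a) (by rw [norm_smul, Real.norm_of_nonneg (by positivity),
    div_mul_cancel₀ _ ha'.ne'])
  rw [real_inner_smul_right, real_inner_self_eq_norm_sq, div_mul_eq_mul_div, sq,
    ← mul_assoc, mul_div_cancel_right₀ _ ha'.ne'] at hu
  exact le_of_mul_le_mul_left hu ht

variable [CompleteSpace F]

theorem exists_norm_gradient_sub_le_of_isApproxSupergradient {v : F → ℝ} {x₀ : F}
    (hv : DifferentiableAt ℝ v x₀) {c ε : ℝ} (hc : 0 < c) (hε : 0 < ε) :
    ∃ δ > 0, ∃ γ > 0, ∀ y q, ‖y - x₀‖ ≤ δ → IsApproxSupergradient v c γ y q →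
      ‖gradient v x₀ - q‖ ≤ ε := by
  set g := gradient v x₀
  obtain ⟨r, hr, hr_taylor⟩ : ∃ r > 0, ∀ y, dist y x₀ < r →
      |v y - v x₀ - ⟪g, y - x₀⟫| ≤ ε / 8 * ‖y - x₀‖ :=
    Metric.eventually_nhds_iff.1 ((hasGradientAt_iff_isLittleO.1 hv.hasGradientAt).def
      (by positivity))
  set t := min (r / 2) (min (ε / (4 * c)) 1)
  have ht₀ : 0 < t := lt_min (by positivity) (lt_min (by positivity) one_pos)
  have htr : t ≤ r / 2 := min_le_left _ _
  have htε : t ≤ ε / (4 * c) := (min_le_right _ _).trans (min_le_left _ _)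
  have ht₁ : t ≤ 1 := (min_le_right _ _).trans (min_le_right _ _)
  refine ⟨t / 2, by positivity, t * ε / 4, by positivity, fun y q hy hq =>
    norm_le_of_forall_norm_eq_inner_le ht₀ hε.le fun u hu => ?_⟩
  have hyu : ‖y + u - x₀‖ ≤ 3 * t / 2 := by
    rw [add_sub_right_comm]; linarith [norm_add_le (y - x₀) u]
  have hy' := (abs_le.1 (hr_taylor y (by rw [dist_eq_norm]; linarith))).2
  have hyu' := (abs_le.1 (hr_taylor (y + u) (by rw [dist_eq_norm]; linarith))).1
  have hupper := hq u (hu.le.trans ht₁)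
  rw [hu] at hupper
  have hsplit : ⟪g, y + u - x₀⟫ = ⟪g, y - x₀⟫ + ⟪g, u⟫ := by
    rw [add_sub_right_comm, inner_add_right]
  have hct : c / 2 * t ^ 2 ≤ ε / 8 * t := by
    have : c * t ≤ ε / 4 := by rw [le_div_iff₀ (by positivity)] at htε; linarith
    nlinarith
  have : ε / 8 * ‖y + u - x₀‖ ≤ ε / 8 * (3 * t / 2) := by gcongr
  have : ε / 8 * ‖y - x₀‖ ≤ ε / 8 * (t / 2) := by gcongr
  have : 0 < t * ε := by positivity
  rw [inner_sub_left]
  linarith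

theorem tendstoLocallyUniformlyOn_gradient_of_isApproxSupergradient {ι : Type*} {l : Filter ι}
    {v : F → ℝ} {q : ι → F → F} {s : Set F} {c : ℝ} (hc : 0 < c)
    (hv : ∀ x ∈ s, DifferentiableAt ℝ v x)
    (hv_grad : ∀ x ∈ s, IsApproxSupergradient v c 0 x (gradient v x))
    (hq : ∀ γ > 0, ∀ᶠ i in l, ∀ x ∈ s, IsApproxSupergradient v c γ x (q i x)) :
    TendstoLocallyUniformlyOn q (gradient v) l s := by
  rw [Metric.tendstoLocallyUniformlyOn_iff]
  intro ε hε x₀ hx₀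
  obtain ⟨δ, hδ, γ, hγ, hstable⟩ :=
    exists_norm_gradient_sub_le_of_isApproxSupergradient (hv x₀ hx₀) hc
      (show 0 < ε / 3 by positivity)
  refine ⟨s ∩ closedBall x₀ δ, inter_mem_nhdsWithin s (closedBall_mem_nhds x₀ hδ), ?_⟩
  filter_upwards [hq γ hγ] with i hi y ⟨hys, hyδ⟩
  rw [mem_closedBall, dist_eq_norm] at hyδ
  have hq_near := hstable y (q i y) hyδ (hi y hys)
  have hv_near := hstable y (gradient v y) hyδ ((hv_grad y hys).mono hγ.le)
  rw [dist_eq_norm, ← sub_sub_sub_cancel_left _ _ (gradient v x₀)]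
  linarith [norm_sub_le (gradient v x₀ - q i y) (gradient v x₀ - gradient v y)]

theorem eventually_isApproxSupergradient_gradient {ι : Type*} {l : Filter ι}
    {f : ι → F → ℝ} {v : F → ℝ} {K : Set F} {L c : ℝ} {η : ι → ℝ}
    (hf : ∀ i, Differentiable ℝ (f i)) (hL : ∀ i x, ‖gradient (f i) x‖ ≤ L) (hc : 0 ≤ c)
    (hfv : TendstoUniformlyOn f v l (cthickening 1 K)) (hη : Tendsto η l (𝓝 0))
    (hsc : ∀ i x y, ⟪gradient (f i) y - gradient (f i) x, y - x⟫ ≤ c * (‖y - x‖ ^ 2 + η i ^ 2))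
    {γ : ℝ} (hγ : 0 < γ) :
    ∀ᶠ i in l, ∀ x ∈ K, IsApproxSupergradient v c γ x (gradient (f i) x) := by
  have hLτ : ∀ᶠ τ in 𝓝[>] (0 : ℝ), 2 * L * τ < γ / 4 :=
    (tendsto_nhdsWithin_of_tendsto_nhds (by simpa using (continuous_const_mul (2 * L)).tendsto 0)
      ).eventually (gt_mem_nhds (by positivity))
  obtain ⟨τ, hτL, hτ₀, hτ₁⟩ := (hLτ.and (Ioo_mem_nhdsGT one_pos)).exists
  have hητ : ∀ᶠ i in l, c * η i ^ 2 / τ < γ / 4 :=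
    (by simpa using ((hη.pow 2).const_mul c).div_const τ : Tendsto (fun i => c * η i ^ 2 / τ) l
      (𝓝 0)).eventually (gt_mem_nhds (by positivity))
  filter_upwards [hητ, Metric.tendstoUniformlyOn_iff.1 hfv (γ / 4) (by positivity)]
    with i hi hclose x hx
  have hfi := isApproxSupergradient_gradient_of_inner_gradient_sub_le (hf i) (hL i) hc hτ₀
    hτ₁.le (hsc i) x
  refine (hfi.of_abs_sub_le (α := γ / 4) fun y hy => ?_).mono (by linarith)
  rw [abs_sub_comm, ← Real.dist_eq]
  exact (hclose y (closedBall_subset_cthickening hx 1 hy)).le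

/-- Locally uniformly convergent, uniformly Lipschitz, weakly semiconcave functions have
gradients converging uniformly on compact sets to the gradient of the (semiconcave)
limit. -/
theorem stmt18 (d : ℕ) (L c : ℝ) (hc : 0 < c)
    (vn : ℕ → EuclideanSpace ℝ (Fin d) → ℝ)
    (v : EuclideanSpace ℝ (Fin d) → ℝ)
    (hvn : ∀ n, Differentiable ℝ (vn n))
    (hv : Differentiable ℝ v)
    (hLip : ∀ n x, ‖gradient (vn n) x‖ ≤ L)
    (hconv : TendstoLocallyUniformly vn v atTop)
    (η : ℕ → ℝ) (hη : Tendsto η atTop (nhds 0))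
    (hsc : ∀ n (x y : EuclideanSpace ℝ (Fin d)),
      ⟪gradient (vn n) y - gradient (vn n) x, y - x⟫ ≤ c * (‖y - x‖ ^ 2 + η n ^ 2))
    (hvsc : ∀ x y : EuclideanSpace ℝ (Fin d),
      v y ≤ v x + ⟪gradient v x, y - x⟫ + (c / 2) * ‖y - x‖ ^ 2) :
    ∀ K : Set (EuclideanSpace ℝ (Fin d)), IsCompact K →
      TendstoUniformlyOn (fun n x => gradient (vn n) x) (gradient v) atTop K := by
  intro K hK
  have hvn_unif : TendstoUniformlyOn vn v atTop (cthickening 1 K) :=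
    tendstoLocallyUniformly_iff_forall_isCompact.1 hconv _ hK.cthickening
  have hv_grad (x : EuclideanSpace ℝ (Fin d)) : IsApproxSupergradient v c 0 x (gradient v x) :=
    fun w _ => by simpa using hvsc x (x + w)
  refine (tendstoLocallyUniformlyOn_iff_tendstoUniformlyOn_of_compact hK).1
    (tendstoLocallyUniformlyOn_gradient_of_isApproxSupergradient hc (fun x _ => hv x)
      (fun x _ => hv_grad x) fun γ hγ => ?_)
  exact eventually_isApproxSupergradient_gradient hvn hLip hc.le hvn_unif hη hsc hγ
end
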